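/- Let ρ : ℝ → ℝ be continuous and suppose z = (v,w) : Ω_∞ → ℝ² is such that z is Lipschitz on Ω_T for every T > 0, v_x ∈ [0,1] a.e. in Ω_∞, and w_x = v and w_t = ρ(v_x) a.e. in Ω_∞. Then u := v_x ∈ L^∞(Ω_∞;[0,1]) is a distributional solution of u_t = (ρ(u))_{xx} in Ω_∞; that is, for every φ ∈ C_c^∞(Ω_∞) one has ∫₀^∞∫₀^L (u φ_t + ρ(u) φ_{xx}) dx dt = 0. -/

import Mathlib

open MeasureTheory Set Filter Topology

noncomputable def pdX (F : ℝ × ℝ → ℝ) : ℝ × ℝ → ℝ := fun p => deriv (fun y => F (y, p.2)) p.1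
noncomputable def pdT (F : ℝ × ℝ → ℝ) : ℝ × ℝ → ℝ := fun p => deriv (fun s => F (p.1, s)) p.2

lemma hasDerivAt_sectX {F : ℝ × ℝ → ℝ} (hF : Differentiable ℝ F) (p : ℝ × ℝ) :
    HasDerivAt (fun y => F (y, p.2)) (fderiv ℝ F p ((1:ℝ), (0:ℝ))) p.1 := by
  have h1 : HasDerivAt (fun y : ℝ => (y, p.2)) ((1:ℝ), (0:ℝ)) p.1 :=
    HasDerivAt.prodMk (hasDerivAt_id p.1) (hasDerivAt_const p.1 p.2)
  exact ((hF p).hasFDerivAt.comp_hasDerivAt p.1 h1)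

lemma hasDerivAt_sectT {F : ℝ × ℝ → ℝ} (hF : Differentiable ℝ F) (p : ℝ × ℝ) :
    HasDerivAt (fun s => F (p.1, s)) (fderiv ℝ F p ((0:ℝ), (1:ℝ))) p.2 := by
  have h1 : HasDerivAt (fun s : ℝ => (p.1, s)) ((0:ℝ), (1:ℝ)) p.2 :=
    HasDerivAt.prodMk (hasDerivAt_const p.2 p.1) (hasDerivAt_id p.2)
  exact ((hF p).hasFDerivAt.comp_hasDerivAt p.2 h1)

lemma pdX_eq {F : ℝ × ℝ → ℝ} (hF : Differentiable ℝ F) :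
    pdX F = fun p => fderiv ℝ F p ((1:ℝ), (0:ℝ)) :=
  funext fun p => (hasDerivAt_sectX hF p).deriv

lemma pdT_eq {F : ℝ × ℝ → ℝ} (hF : Differentiable ℝ F) :
    pdT F = fun p => fderiv ℝ F p ((0:ℝ), (1:ℝ)) :=
  funext fun p => (hasDerivAt_sectT hF p).deriv

lemma contDiff_pdX {F : ℝ × ℝ → ℝ} (hF : ContDiff ℝ (⊤ : ℕ∞) F) : ContDiff ℝ (⊤ : ℕ∞) (pdX F) := by
  rw [pdX_eq (hF.differentiable (by simp))]
  exact (hF.fderiv_right (by simp)).clm_apply contDiff_const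

lemma contDiff_pdT {F : ℝ × ℝ → ℝ} (hF : ContDiff ℝ (⊤ : ℕ∞) F) : ContDiff ℝ (⊤ : ℕ∞) (pdT F) := by
  rw [pdT_eq (hF.differentiable (by simp))]
  exact (hF.fderiv_right (by simp)).clm_apply contDiff_const

lemma pdX_zero_of_nmem {F : ℝ × ℝ → ℝ} {p : ℝ × ℝ} (hp : p ∉ tsupport F) : pdX F p = 0 := by
  have h0 : ∀ᶠ q in 𝓝 p, F q = 0 := by
    filter_upwards [(isClosed_tsupport F).isOpen_compl.mem_nhds hp] with q hq
    exact image_eq_zero_of_notMem_tsupport hq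
  have h1 : (fun y => F (y, p.2)) =ᶠ[𝓝 p.1] (fun _ => (0:ℝ)) := by
    have hc : ContinuousAt (fun y : ℝ => (y, p.2)) p.1 :=
      (continuous_id.prodMk continuous_const).continuousAt
    exact hc.tendsto.eventually h0
  rw [pdX, h1.deriv_eq, deriv_const]

lemma pdT_zero_of_nmem {F : ℝ × ℝ → ℝ} {p : ℝ × ℝ} (hp : p ∉ tsupport F) : pdT F p = 0 := by
  have h0 : ∀ᶠ q in 𝓝 p, F q = 0 := by
    filter_upwards [(isClosed_tsupport F).isOpen_compl.mem_nhds hp] with q hq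
    exact image_eq_zero_of_notMem_tsupport hq
  have h1 : (fun s => F (p.1, s)) =ᶠ[𝓝 p.2] (fun _ => (0:ℝ)) := by
    have hc : ContinuousAt (fun s : ℝ => (p.1, s)) p.2 :=
      (continuous_const.prodMk continuous_id).continuousAt
    exact hc.tendsto.eventually h0
  rw [pdT, h1.deriv_eq, deriv_const]

lemma tsupport_pdX_subset (F : ℝ × ℝ → ℝ) : tsupport (pdX F) ⊆ tsupport F := by
  apply closure_minimal _ (isClosed_tsupport F)
  intro p hp
  by_contra h
  exact hp (pdX_zero_of_nmem h)

lemma tsupport_pdT_subset (F : ℝ × ℝ → ℝ) : tsupport (pdT F) ⊆ tsupport F := by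
  apply closure_minimal _ (isClosed_tsupport F)
  intro p hp
  by_contra h
  exact hp (pdT_zero_of_nmem h)

lemma hcs_of_tsupport_subset {F G : ℝ × ℝ → ℝ} (h : tsupport G ⊆ tsupport F)
    (hF : HasCompactSupport F) : HasCompactSupport G :=
  IsCompact.of_isClosed_subset hF (isClosed_tsupport _) h

/-- Clairaut's theorem for the curried partial derivatives. -/
lemma pdX_pdT_comm {F : ℝ × ℝ → ℝ} (hF : ContDiff ℝ (⊤ : ℕ∞) F) (p : ℝ × ℝ) :
    pdX (pdT F) p = pdT (pdX F) p := by
  have hd : Differentiable ℝ F := hF.differentiable (by simp)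
  have hf' : ContDiff ℝ (⊤ : ℕ∞) (fderiv ℝ F) := hF.fderiv_right (by simp)
  have hdd : ∀ q, DifferentiableAt ℝ (fderiv ℝ F) q := fun q => (hf'.differentiable (by simp)) q
  have hdiffapp : ∀ u : ℝ × ℝ, Differentiable ℝ (fun q => fderiv ℝ F q u) := fun u =>
    (hf'.differentiable (by simp)).clm_apply (differentiable_const u)
  have happ : ∀ (u a : ℝ × ℝ) (q : ℝ × ℝ),
      fderiv ℝ (fun q => fderiv ℝ F q u) q a = fderiv ℝ (fderiv ℝ F) q a u := by
    intro u a q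
    rw [fderiv_clm_apply (hdd q) (differentiableAt_const u)]
    simp
  have hsymm := (hF.contDiffAt (x := p)).isSymmSndFDerivAt (by rw [minSmoothness_of_isRCLikeNormedField]; exact WithTop.coe_le_coe.2 le_top)
  rw [pdT_eq hd, pdX_eq hd]
  rw [pdX_eq (hdiffapp _), pdT_eq (hdiffapp _)]
  simp only [happ]
  exact hsymm.eq _ _

/-- Integration by parts against a Lipschitz function on the line. -/
lemma ibp_lipschitz {g : ℝ → ℝ} {K : NNReal} (hg : LipschitzWith K g)
    {ψ : ℝ → ℝ} (hψ : ContDiff ℝ (⊤ : ℕ∞) ψ) (hψc : HasCompactSupport ψ) :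
    ∫ x, deriv g x * ψ x = -∫ x, g x * deriv ψ x := by
  have hgc : Continuous g := hg.continuous
  have hψcont : Continuous ψ := hψ.continuous
  obtain ⟨M, hMψ⟩ := hψ.lipschitzWith_of_hasCompactSupport hψc (by simp)
  -- the sequence hₙ = 1/(n+1)
  set h : ℕ → ℝ := fun n => 1 / (n + 1) with hh
  have hpos : ∀ n, 0 < h n := fun n => by positivity
  have hle1 : ∀ n, h n ≤ 1 := fun n => by
    rw [hh]; rw [div_le_one (by positivity)]; exact le_add_of_nonneg_left (Nat.cast_nonneg n)
  have htend : Tendsto h atTop (𝓝 0) := tendsto_one_div_add_atTop_nhds_zero_nat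
  -- integrability of the building blocks
  have Ia : ∀ a : ℝ, Integrable (fun x => g (x + a) * ψ x) := by
    intro a
    apply Continuous.integrable_of_hasCompactSupport
      ((hgc.comp (continuous_id.add continuous_const)).mul hψcont)
    exact hψc.mul_left
  have I0 : Integrable (fun x => g x * ψ x) := by
    apply Continuous.integrable_of_hasCompactSupport (hgc.mul hψcont)
    exact hψc.mul_left
  have Ib : ∀ a : ℝ, Integrable (fun x => g x * ψ (x - a)) := by
    intro a
    apply Continuous.integrable_of_hasCompactSupport
      (hgc.mul (hψcont.comp (continuous_id.sub continuous_const)))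
    exact (hψc.comp_homeomorph (Homeomorph.subRight a)).mul_left
  -- the translation identity
  have htrans : ∀ a : ℝ, (∫ x, g (x + a) * ψ x) = ∫ x, g x * ψ (x - a) := by
    intro a
    have := integral_add_right_eq_self (μ := volume) (fun x => g x * ψ (x - a)) a
    rw [← this]
    congr 1 with x
    simp
  -- A n equals its x-shifted form
  have hAeq : ∀ n, (∫ x, (g (x + h n) - g x) / h n * ψ x)
      = ∫ x, g x * ((ψ (x - h n) - ψ x) / h n) := by
    intro n
    have e1 : (∫ x, (g (x + h n) - g x) / h n * ψ x)
        = ((∫ x, g (x + h n) * ψ x) - ∫ x, g x * ψ x) / h n := by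
      rw [← integral_sub (Ia (h n)) I0, ← integral_div]
      congr 1 with x; ring
    have e2 : (∫ x, g x * ((ψ (x - h n) - ψ x) / h n))
        = ((∫ x, g x * ψ (x - h n)) - ∫ x, g x * ψ x) / h n := by
      rw [← integral_sub (Ib (h n)) I0, ← integral_div]
      congr 1 with x; ring
    rw [e1, e2, htrans]
  -- first limit
  have lim1 : Tendsto (fun n => ∫ x, (g (x + h n) - g x) / h n * ψ x) atTop
      (𝓝 (∫ x, deriv g x * ψ x)) := by
    apply tendsto_integral_of_dominated_convergence (bound := fun x => (K : ℝ) * |ψ x|)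
    · intro n
      exact ((((hgc.comp (continuous_id.add continuous_const)).sub hgc).div_const _).mul
        hψcont).aestronglyMeasurable
    · apply Continuous.integrable_of_hasCompactSupport (continuous_const.mul hψcont.abs)
      apply HasCompactSupport.mul_left
      exact hψc.abs
    · intro n
      refine Eventually.of_forall fun x => ?_
      rw [Real.norm_eq_abs, abs_mul]
      gcongr
      rw [abs_div, div_le_iff₀ (abs_pos.mpr (hpos n).ne')]
      calc |g (x + h n) - g x| ≤ K * |x + h n - x| := by
            simpa [Real.dist_eq] using hg.dist_le_mul (x + h n) x
        _ = K * |h n| := by ring_nf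
    · filter_upwards [hg.ae_differentiableAt_real] with x hx
      have hd := hx.hasDerivAt
      have hT : Tendsto (fun n => x + h n) atTop (𝓝[≠] x) := by
        apply tendsto_nhdsWithin_of_tendsto_nhds_of_eventually_within
        · simpa using tendsto_const_nhds.add htend
        · exact Eventually.of_forall fun n => by
            simp [ne_of_gt, (hpos n)]
      have := (hasDerivAt_iff_tendsto_slope.1 hd).comp hT
      have hslope : ∀ n, slope g x (x + h n) = (g (x + h n) - g x) / h n := by
        intro n; rw [slope_def_field]; congr 1; ring
      simp only [Function.comp_def, hslope] at this
      exact this.mul_const _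
  -- second limit
  have lim2 : Tendsto (fun n => ∫ x, g x * ((ψ (x - h n) - ψ x) / h n)) atTop
      (𝓝 (∫ x, g x * (-deriv ψ x))) := by
    set S : Set ℝ := Metric.cthickening 1 (tsupport ψ) with hS
    have hScpt : IsCompact S := hψc.cthickening
    apply tendsto_integral_of_dominated_convergence
      (bound := S.indicator fun x => |g x| * M)
    · intro n
      exact (hgc.mul (((hψcont.comp (continuous_id.sub continuous_const)).sub
        hψcont).div_const _)).aestronglyMeasurable
    · rw [integrable_indicator_iff hScpt.measurableSet]
      exact (hgc.abs.mul continuous_const).continuousOn.integrableOn_compact hScpt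
    · intro n
      refine Eventually.of_forall fun x => ?_
      by_cases hx : x ∈ S
      · rw [Set.indicator_of_mem hx, Real.norm_eq_abs, abs_mul]
        gcongr
        rw [abs_div, div_le_iff₀ (abs_pos.mpr (hpos n).ne')]
        calc |ψ (x - h n) - ψ x| ≤ M * |x - h n - x| := by
              simpa [Real.dist_eq] using hMψ.dist_le_mul (x - h n) x
          _ = M * |h n| := by rw [abs_sub_comm]; ring_nf
      · have hψx : ψ x = 0 := by
          apply image_eq_zero_of_notMem_tsupport
          exact fun hmem => hx (Metric.self_subset_cthickening _ hmem)
        have hψx' : ψ (x - h n) = 0 := by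
          apply image_eq_zero_of_notMem_tsupport
          intro hmem
          apply hx
          apply Metric.mem_cthickening_of_dist_le x (x - h n) 1 _ hmem
          rw [Real.dist_eq]
          simpa [abs_of_pos (hpos n)] using hle1 n
        rw [Set.indicator_of_notMem hx]
        simp [hψx, hψx']
    · refine Eventually.of_forall fun x => ?_
      have hd : HasDerivAt ψ (deriv ψ x) x := ((hψ.differentiable (by simp)) x).hasDerivAt
      have hT : Tendsto (fun n => x - h n) atTop (𝓝[≠] x) := by
        apply tendsto_nhdsWithin_of_tendsto_nhds_of_eventually_within
        · simpa using tendsto_const_nhds.sub htend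
        · exact Eventually.of_forall fun n => by
            simp [ne_of_lt, sub_lt_self x (hpos n)]
      have hcomp := (hasDerivAt_iff_tendsto_slope.1 hd).comp hT
      have hslope : ∀ n, slope ψ x (x - h n) = -((ψ (x - h n) - ψ x) / h n) := by
        intro n
        rw [slope_def_field]
        rw [show x - h n - x = -(h n) by ring]
        rw [div_neg]
      simp only [Function.comp_def, hslope] at hcomp
      have : Tendsto (fun n => (ψ (x - h n) - ψ x) / h n) atTop (𝓝 (-deriv ψ x)) := by
        have := hcomp.neg
        simpa using this
      exact (tendsto_const_nhds.mul this)
  -- combine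
  have lim2' : Tendsto (fun n => ∫ x, (g (x + h n) - g x) / h n * ψ x) atTop
      (𝓝 (∫ x, g x * (-deriv ψ x))) := by
    simpa only [hAeq] using lim2
  have := tendsto_nhds_unique lim1 lim2'
  rw [this]
  simp [mul_neg, integral_neg]

lemma abs_deriv_le_lip {g : ℝ → ℝ} {K : NNReal} (hg : LipschitzWith K g) (x : ℝ) :
    |deriv g x| ≤ K := by
  by_cases h : DifferentiableAt ℝ g x
  · simpa [Real.norm_eq_abs] using h.hasDerivAt.le_of_lipschitz hg
  · simp [deriv_zero_of_not_differentiableAt h]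


lemma sect_contDiffX {F : ℝ × ℝ → ℝ} (hF : ContDiff ℝ (⊤ : ℕ∞) F) (t : ℝ) :
    ContDiff ℝ (⊤ : ℕ∞) (fun y => F (y, t)) :=
  hF.comp (contDiff_id.prodMk contDiff_const)

lemma sect_contDiffT {F : ℝ × ℝ → ℝ} (hF : ContDiff ℝ (⊤ : ℕ∞) F) (x : ℝ) :
    ContDiff ℝ (⊤ : ℕ∞) (fun s => F (x, s)) :=
  hF.comp (contDiff_const.prodMk contDiff_id)

lemma sect_hcsX {F : ℝ × ℝ → ℝ} (hF : HasCompactSupport F) (t : ℝ) :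
    HasCompactSupport (fun y => F (y, t)) := by
  apply IsCompact.of_isClosed_subset (hF.image continuous_fst) (isClosed_tsupport _)
  apply closure_minimal _ (hF.image continuous_fst).isClosed
  intro y hy
  exact ⟨(y, t), subset_tsupport _ hy, rfl⟩

lemma sect_hcsT {F : ℝ × ℝ → ℝ} (hF : HasCompactSupport F) (x : ℝ) :
    HasCompactSupport (fun s => F (x, s)) := by
  apply IsCompact.of_isClosed_subset (hF.image continuous_snd) (isClosed_tsupport _)
  apply closure_minimal _ (hF.image continuous_snd).isClosed
  intro s hs
  exact ⟨(x, s), subset_tsupport _ hs, rfl⟩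

lemma integrable_of_bound {F : ℝ × ℝ → ℝ} {s : Set (ℝ × ℝ)} (hs : IsCompact s)
    (hm : AEStronglyMeasurable F (volume.prod volume))
    (hsupp : ∀ p, p ∉ s → F p = 0) (C : ℝ) (hC : ∀ p ∈ s, |F p| ≤ C) :
    Integrable F (volume.prod volume) := by
  refine Integrable.mono' (g := s.indicator fun _ => C) ?_ hm ?_
  · exact (integrable_indicator_iff hs.measurableSet).2
      (integrableOn_const hs.measure_lt_top.ne)
  · refine Eventually.of_forall fun p => ?_
    by_cases hp : p ∈ s
    · simpa [Set.indicator_of_mem hp, Real.norm_eq_abs] using hC p hp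
    · simp [Set.indicator_of_notMem hp, hsupp p hp, Real.norm_eq_abs]

lemma iter_tx {F : ℝ × ℝ → ℝ} (hF : Integrable F (volume.prod volume)) :
    (∫ t : ℝ, ∫ x : ℝ, F (x, t)) = ∫ p, F p ∂(volume.prod volume) := by
  rw [← integral_prod_swap]
  exact integral_integral hF.swap

lemma iter_xt {F : ℝ × ℝ → ℝ} (hF : Integrable F (volume.prod volume)) :
    (∫ x : ℝ, ∫ t : ℝ, F (x, t)) = ∫ p, F p ∂(volume.prod volume) :=
  integral_integral hF

section MainAux

theorem main_aux (L : ℝ) (hL : 0 < L) (f : ℝ → ℝ) (hf : Continuous f)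
    (v w : ℝ → ℝ → ℝ)
    (hlip : ∀ T > (0:ℝ), ∃ K : NNReal,
      LipschitzOnWith K (fun p : ℝ × ℝ => (v p.1 p.2, w p.1 p.2))
        (Set.Ioo 0 L ×ˢ Set.Ioo 0 T))
    (hae : ∀ᵐ p ∂(volume.restrict (Set.Ioo (0:ℝ) L ×ˢ Set.Ioi (0:ℝ))),
      deriv (fun y => v y p.2) p.1 ∈ Set.Icc (0:ℝ) 1 ∧
      deriv (fun y => w y p.2) p.1 = v p.1 p.2 ∧
      deriv (fun s => w p.1 s) p.2 = f (deriv (fun y => v y p.2) p.1))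
    (Φ : ℝ × ℝ → ℝ) (hφ : ContDiff ℝ (⊤ : ℕ∞) Φ) (hφc : HasCompactSupport Φ)
    (hφs : tsupport Φ ⊆ Set.Ioo 0 L ×ˢ Set.Ioi 0) :
    (∫ t in Set.Ioi (0:ℝ), ∫ x in Set.Ioo (0:ℝ) L,
        (deriv (fun y => v y t) x * pdT Φ (x, t)
          + f (deriv (fun y => v y t) x) * pdX (pdX Φ) (x, t))) = 0 := by
  -- choose a time horizon T beyond the support of Φ
  obtain ⟨T0, hT0⟩ := (hφc.image continuous_snd).bddAbove
  set T : ℝ := max T0 0 + 1 with hTdef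
  have hT : 0 < T := by positivity
  set R : Set (ℝ × ℝ) := Set.Ioo (0:ℝ) L ×ˢ Set.Ioo (0:ℝ) T with hRdef
  have hsubR : tsupport Φ ⊆ R := by
    intro p hp
    obtain ⟨h1, h2⟩ := hφs hp
    refine ⟨h1, h2, ?_⟩
    have hmem : p.2 ∈ Prod.snd '' tsupport Φ := ⟨p, hp, rfl⟩
    have := hT0 hmem
    calc p.2 ≤ T0 := this
      _ ≤ max T0 0 := le_max_left _ _
      _ < T := by rw [hTdef]; linarith
  -- Lipschitz extensions V, W of v, w from R to the whole plane
  obtain ⟨K, hK⟩ := hlip T hT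
  have hvL : LipschitzOnWith K (fun p : ℝ × ℝ => v p.1 p.2) R := by
    simpa [Function.comp_def] using LipschitzWith.comp_lipschitzOnWith LipschitzWith.prod_fst hK
  have hwL : LipschitzOnWith K (fun p : ℝ × ℝ => w p.1 p.2) R := by
    simpa [Function.comp_def] using LipschitzWith.comp_lipschitzOnWith LipschitzWith.prod_snd hK
  obtain ⟨V, hVlip, hVeq⟩ := hvL.extend_real
  obtain ⟨W, hWlip, hWeq⟩ := hwL.extend_real
  have hVx : ∀ t : ℝ, LipschitzWith K (fun y => V (y, t)) := fun t => by
    simpa [Function.comp_def] using hVlip.comp (LipschitzWith.prodMk_right t)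
  have hWx : ∀ t : ℝ, LipschitzWith K (fun y => W (y, t)) := fun t => by
    simpa [Function.comp_def] using hWlip.comp (LipschitzWith.prodMk_right t)
  have hWt : ∀ x : ℝ, LipschitzWith K (fun s => W (x, s)) := fun x => by
    simpa [Function.comp_def] using hWlip.comp (LipschitzWith.prodMk_left x)
  -- transfer of derivatives on the open rectangle R
  have htrv : ∀ p : ℝ × ℝ, p ∈ R → deriv (fun y => v y p.2) p.1 = pdX V p := by
    intro p hp
    show deriv (fun y => v y p.2) p.1 = deriv (fun y => V (y, p.2)) p.1
    apply Filter.EventuallyEq.deriv_eq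
    filter_upwards [Ioo_mem_nhds hp.1.1 hp.1.2] with y hy
    exact hVeq (Set.mk_mem_prod hy hp.2)
  have htrwx : ∀ p : ℝ × ℝ, p ∈ R → deriv (fun y => w y p.2) p.1 = pdX W p := by
    intro p hp
    show deriv (fun y => w y p.2) p.1 = deriv (fun y => W (y, p.2)) p.1
    apply Filter.EventuallyEq.deriv_eq
    filter_upwards [Ioo_mem_nhds hp.1.1 hp.1.2] with y hy
    exact hWeq (Set.mk_mem_prod hy hp.2)
  have htrwt : ∀ p : ℝ × ℝ, p ∈ R → deriv (fun s => w p.1 s) p.2 = pdT W p := by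
    intro p hp
    show deriv (fun s => w p.1 s) p.2 = deriv (fun s => W (p.1, s)) p.2
    apply Filter.EventuallyEq.deriv_eq
    filter_upwards [Ioo_mem_nhds hp.2.1 hp.2.2] with s hs
    exact hWeq (Set.mk_mem_prod hp.1 hs)
  -- the almost-everywhere information, transported to V and W
  have hR : MeasurableSet R := measurableSet_Ioo.prod measurableSet_Ioo
  have hae2 : ∀ᵐ p ∂(volume.prod volume : Measure (ℝ × ℝ)), p ∈ R →
      (pdX V p ∈ Set.Icc (0:ℝ) 1 ∧ pdX W p = V p ∧ pdT W p = f (pdX V p)) := by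
    rw [← Measure.volume_eq_prod]
    have hsub : R ⊆ Set.Ioo (0:ℝ) L ×ˢ Set.Ioi (0:ℝ) :=
      Set.prod_mono subset_rfl Set.Ioo_subset_Ioi_self
    have h1 : ∀ᵐ p ∂(volume.restrict R),
        (pdX V p ∈ Set.Icc (0:ℝ) 1 ∧ pdX W p = V p ∧ pdT W p = f (pdX V p)) := by
      filter_upwards [ae_restrict_of_ae_restrict_of_subset hsub hae, ae_restrict_mem hR]
        with p hp hpR
      obtain ⟨h1, h2, h3⟩ := hp
      rw [htrv p hpR] at h1 h3
      rw [htrwx p hpR] at h2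
      rw [htrwt p hpR] at h3
      exact ⟨h1, h2.trans (hVeq hpR), h3⟩
    exact (ae_restrict_iff' hR).1 h1
  -- joint measurability of the extended derivatives
  have MuV : Measurable (pdX V) := by
    have hc : Continuous (Function.uncurry fun (t y : ℝ) => V (y, t)) :=
      hVlip.continuous.comp continuous_swap
    exact (measurable_deriv_with_param hc).comp measurable_swap
  have MqW : Measurable (pdX W) := by
    have hc : Continuous (Function.uncurry fun (t y : ℝ) => W (y, t)) :=
      hWlip.continuous.comp continuous_swap
    exact (measurable_deriv_with_param hc).comp measurable_swap
  have MrW : Measurable (pdT W) := by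
    have hc : Continuous (Function.uncurry fun (x s : ℝ) => W (x, s)) := hWlip.continuous
    exact measurable_deriv_with_param hc
  -- uniform bounds
  have bV : ∀ p : ℝ × ℝ, |pdX V p| ≤ K := fun p => abs_deriv_le_lip (hVx p.2) p.1
  have bW : ∀ p : ℝ × ℝ, |pdX W p| ≤ K := fun p => abs_deriv_le_lip (hWx p.2) p.1
  have bWt : ∀ p : ℝ × ℝ, |pdT W p| ≤ K := fun p => abs_deriv_le_lip (hWt p.1) p.2
  obtain ⟨Cf, hCf⟩ := (isCompact_Icc (a := -(K:ℝ)) (b := (K:ℝ))).exists_bound_of_continuousOn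
    hf.continuousOn
  have hfb : ∀ y : ℝ, |y| ≤ (K:ℝ) → |f y| ≤ Cf := by
    intro y hy
    have := hCf y (by rw [Set.mem_Icc]; constructor <;> [linarith [abs_le.1 hy |>.1]; exact (abs_le.1 hy).2])
    simpa [Real.norm_eq_abs] using this
  -- smoothness and support of the partial derivatives of Φ
  have hP1 : ContDiff ℝ (⊤ : ℕ∞) (pdT Φ) := contDiff_pdT hφ
  have hP2 : ContDiff ℝ (⊤ : ℕ∞) (pdX Φ) := contDiff_pdX hφ
  have hP3 : ContDiff ℝ (⊤ : ℕ∞) (pdX (pdX Φ)) := contDiff_pdX hP2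
  have hG : ContDiff ℝ (⊤ : ℕ∞) (pdT (pdX Φ)) := contDiff_pdT hP2
  have hH : ContDiff ℝ (⊤ : ℕ∞) (pdX (pdT (pdX Φ))) := contDiff_pdX hG
  have hH2 : ContDiff ℝ (⊤ : ℕ∞) (pdT (pdX (pdX Φ))) := contDiff_pdT hP3
  have ts1 : tsupport (pdT Φ) ⊆ tsupport Φ := tsupport_pdT_subset Φ
  have ts2 : tsupport (pdX Φ) ⊆ tsupport Φ := tsupport_pdX_subset Φ
  have ts3 : tsupport (pdX (pdX Φ)) ⊆ tsupport Φ :=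
    (tsupport_pdX_subset (pdX Φ)).trans ts2
  have tsG : tsupport (pdT (pdX Φ)) ⊆ tsupport Φ :=
    (tsupport_pdT_subset (pdX Φ)).trans ts2
  have tsH : tsupport (pdX (pdT (pdX Φ))) ⊆ tsupport Φ :=
    (tsupport_pdX_subset (pdT (pdX Φ))).trans tsG
  have tsH2 : tsupport (pdT (pdX (pdX Φ))) ⊆ tsupport Φ :=
    (tsupport_pdT_subset (pdX (pdX Φ))).trans ts3
  have hcs1 : HasCompactSupport (pdT Φ) := hcs_of_tsupport_subset ts1 hφc
  have hcs3 : HasCompactSupport (pdX (pdX Φ)) := hcs_of_tsupport_subset ts3 hφc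
  have hcsG : HasCompactSupport (pdT (pdX Φ)) := hcs_of_tsupport_subset tsG hφc
  have hcsH : HasCompactSupport (pdX (pdT (pdX Φ))) := hcs_of_tsupport_subset tsH hφc
  have hcsH2 : HasCompactSupport (pdT (pdX (pdX Φ))) := hcs_of_tsupport_subset tsH2 hφc
  obtain ⟨C1, hC1⟩ := hcs1.exists_bound_of_continuous hP1.continuous
  obtain ⟨C3, hC3⟩ := hcs3.exists_bound_of_continuous hP3.continuous
  obtain ⟨CG, hCG⟩ := hcsG.exists_bound_of_continuous hG.continuous
  obtain ⟨CH, hCH⟩ := hcsH.exists_bound_of_continuous hH.continuous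
  obtain ⟨CH2, hCH2⟩ := hcsH2.exists_bound_of_continuous hH2.continuous
  obtain ⟨CV, hCV⟩ := hφc.exists_bound_of_continuousOn hVlip.continuous.continuousOn
  obtain ⟨CW, hCW⟩ := hφc.exists_bound_of_continuousOn hWlip.continuous.continuousOn
  -- integrability of all integrands, with respect to the product measure
  have hIA1 : Integrable (fun p => pdX V p * pdT Φ p) (volume.prod volume) := by
    apply integrable_of_bound hφc
      ((MuV.mul hP1.continuous.measurable).aestronglyMeasurable)
      (fun p hp => by simp only [Pi.mul_apply, image_eq_zero_of_notMem_tsupport fun h => hp (ts1 h), mul_zero])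
      ((K : ℝ) * C1)
    intro p _
    simp only [Pi.mul_apply, abs_mul]
    exact mul_le_mul (bV p) (by simpa [Real.norm_eq_abs] using hC1 p) (abs_nonneg _) K.2
  have hIA2 : Integrable (fun p => f (pdX V p) * pdX (pdX Φ) p) (volume.prod volume) := by
    apply integrable_of_bound hφc
      (((hf.measurable.comp MuV).mul hP3.continuous.measurable).aestronglyMeasurable)
      (fun p hp => by simp only [Pi.mul_apply, image_eq_zero_of_notMem_tsupport fun h => hp (ts3 h), mul_zero])
      (Cf * C3)
    intro p _
    simp only [Pi.mul_apply, abs_mul]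
    exact mul_le_mul (hfb _ (bV p)) (by simpa [Real.norm_eq_abs] using hC3 p) (abs_nonneg _)
      ((abs_nonneg _).trans (hfb _ (bV p)))
  have hIB1 : Integrable (fun p => V p * pdT (pdX Φ) p) (volume.prod volume) := by
    apply integrable_of_bound hφc
      ((hVlip.continuous.mul hG.continuous).aestronglyMeasurable)
      (fun p hp => by simp only [Pi.mul_apply, image_eq_zero_of_notMem_tsupport fun h => hp (tsG h), mul_zero])
      (CV * CG)
    intro p hp
    simp only [Pi.mul_apply, abs_mul]
    exact mul_le_mul (by simpa [Real.norm_eq_abs] using hCV p hp)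
      (by simpa [Real.norm_eq_abs] using hCG p) (abs_nonneg _)
      ((abs_nonneg _).trans (by simpa [Real.norm_eq_abs] using hCV p hp))
  have hIB2 : Integrable (fun p => pdX W p * pdT (pdX Φ) p) (volume.prod volume) := by
    apply integrable_of_bound hφc
      ((MqW.mul hG.continuous.measurable).aestronglyMeasurable)
      (fun p hp => by simp only [Pi.mul_apply, image_eq_zero_of_notMem_tsupport fun h => hp (tsG h), mul_zero])
      ((K : ℝ) * CG)
    intro p _
    simp only [Pi.mul_apply, abs_mul]
    exact mul_le_mul (bW p) (by simpa [Real.norm_eq_abs] using hCG p) (abs_nonneg _) K.2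
  have hIC1 : Integrable (fun p => W p * pdX (pdT (pdX Φ)) p) (volume.prod volume) := by
    apply integrable_of_bound hφc
      ((hWlip.continuous.mul hH.continuous).aestronglyMeasurable)
      (fun p hp => by simp only [Pi.mul_apply, image_eq_zero_of_notMem_tsupport fun h => hp (tsH h), mul_zero])
      (CW * CH)
    intro p hp
    simp only [Pi.mul_apply, abs_mul]
    exact mul_le_mul (by simpa [Real.norm_eq_abs] using hCW p hp)
      (by simpa [Real.norm_eq_abs] using hCH p) (abs_nonneg _)
      ((abs_nonneg _).trans (by simpa [Real.norm_eq_abs] using hCW p hp))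
  have hID1 : Integrable (fun p => pdT W p * pdX (pdX Φ) p) (volume.prod volume) := by
    apply integrable_of_bound hφc
      ((MrW.mul hP3.continuous.measurable).aestronglyMeasurable)
      (fun p hp => by simp only [Pi.mul_apply, image_eq_zero_of_notMem_tsupport fun h => hp (ts3 h), mul_zero])
      ((K : ℝ) * C3)
    intro p _
    simp only [Pi.mul_apply, abs_mul]
    exact mul_le_mul (bWt p) (by simpa [Real.norm_eq_abs] using hC3 p) (abs_nonneg _) K.2
  have hID2 : Integrable (fun p => W p * pdT (pdX (pdX Φ)) p) (volume.prod volume) := by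
    apply integrable_of_bound hφc
      ((hWlip.continuous.mul hH2.continuous).aestronglyMeasurable)
      (fun p hp => by simp only [Pi.mul_apply, image_eq_zero_of_notMem_tsupport fun h => hp (tsH2 h), mul_zero])
      (CW * CH2)
    intro p hp
    simp only [Pi.mul_apply, abs_mul]
    exact mul_le_mul (by simpa [Real.norm_eq_abs] using hCW p hp)
      (by simpa [Real.norm_eq_abs] using hCH2 p) (abs_nonneg _)
      ((abs_nonneg _).trans (by simpa [Real.norm_eq_abs] using hCW p hp))
  -- Step 1: rewrite the integrand using the extensions
  have step1 : (∫ t in Set.Ioi (0:ℝ), ∫ x in Set.Ioo (0:ℝ) L,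
      (deriv (fun y => v y t) x * pdT Φ (x, t)
        + f (deriv (fun y => v y t) x) * pdX (pdX Φ) (x, t)))
      = ∫ t in Set.Ioi (0:ℝ), ∫ x in Set.Ioo (0:ℝ) L,
          (pdX V (x, t) * pdT Φ (x, t) + f (pdX V (x, t)) * pdX (pdX Φ) (x, t)) := by
    apply setIntegral_congr_fun measurableSet_Ioi
    intro t ht
    apply setIntegral_congr_fun measurableSet_Ioo
    intro x hx
    dsimp only
    have htrv' : ∀ (a b : ℝ), (a, b) ∈ R → deriv (fun y => v y b) a = pdX V (a, b) :=
      fun a b h => htrv (a, b) h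
    by_cases hT' : t < T
    · rw [htrv' x t ⟨hx, ht, hT'⟩]
    · have hnot : (x, t) ∉ tsupport Φ := fun hmem => hT' (hsubR hmem).2.2
      have z1 : pdT Φ (x, t) = 0 := pdT_zero_of_nmem hnot
      have z2 : pdX (pdX Φ) (x, t) = 0 :=
        pdX_zero_of_nmem fun h => hnot (ts2 h)
      simp only [z1, z2, mul_zero, add_zero]
  -- Step 2: pass to an integral over the plane
  have step2 : (∫ t in Set.Ioi (0:ℝ), ∫ x in Set.Ioo (0:ℝ) L,
      (pdX V (x, t) * pdT Φ (x, t) + f (pdX V (x, t)) * pdX (pdX Φ) (x, t)))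
      = ∫ p, (pdX V p * pdT Φ p + f (pdX V p) * pdX (pdX Φ) p) ∂(volume.prod volume) := by
    have e1 : ∀ t : ℝ, (∫ x in Set.Ioo (0:ℝ) L,
        (pdX V (x, t) * pdT Φ (x, t) + f (pdX V (x, t)) * pdX (pdX Φ) (x, t)))
        = ∫ x, (pdX V (x, t) * pdT Φ (x, t) + f (pdX V (x, t)) * pdX (pdX Φ) (x, t)) := by
      intro t
      apply setIntegral_eq_integral_of_forall_compl_eq_zero
      intro x hx
      have hnot : (x, t) ∉ tsupport Φ := fun hmem => hx (hsubR hmem).1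
      rw [pdT_zero_of_nmem hnot, pdX_zero_of_nmem (fun h => hnot (ts2 h))]
      ring
    simp_rw [e1]
    have e2 : (∫ t in Set.Ioi (0:ℝ), ∫ x : ℝ,
        (pdX V (x, t) * pdT Φ (x, t) + f (pdX V (x, t)) * pdX (pdX Φ) (x, t)))
        = ∫ t : ℝ, ∫ x : ℝ,
            (pdX V (x, t) * pdT Φ (x, t) + f (pdX V (x, t)) * pdX (pdX Φ) (x, t)) := by
      apply setIntegral_eq_integral_of_forall_compl_eq_zero
      intro t ht
      have hz : ∀ x : ℝ,
          (pdX V (x, t) * pdT Φ (x, t) + f (pdX V (x, t)) * pdX (pdX Φ) (x, t)) = 0 := by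
        intro x
        have hnot : (x, t) ∉ tsupport Φ := fun hmem => ht (Set.Ioo_subset_Ioi_self (hsubR hmem).2)
        rw [pdT_zero_of_nmem hnot, pdX_zero_of_nmem (fun h => hnot (ts2 h))]
        ring
      simp only [hz, integral_zero]
    rw [e2]
    exact iter_tx (hIA1.add hIA2)
  -- Term 1 analysis
  have hT1b : ∀ t : ℝ, (∫ x : ℝ, pdX V (x, t) * pdT Φ (x, t))
      = -∫ x : ℝ, V (x, t) * pdT (pdX Φ) (x, t) := by
    intro t
    have h := ibp_lipschitz (hVx t) (sect_contDiffX hP1 t) (sect_hcsX hcs1 t)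
    have h2 : ∀ x : ℝ, pdX (pdT Φ) (x, t) = pdT (pdX Φ) (x, t) :=
      fun x => pdX_pdT_comm hφ (x, t)
    calc (∫ x : ℝ, pdX V (x, t) * pdT Φ (x, t))
        = -∫ x : ℝ, V (x, t) * pdX (pdT Φ) (x, t) := h
      _ = -∫ x : ℝ, V (x, t) * pdT (pdX Φ) (x, t) := by simp_rw [h2]
  have term1 : (∫ p, pdX V p * pdT Φ p ∂(volume.prod volume))
      = ∫ p, W p * pdX (pdT (pdX Φ)) p ∂(volume.prod volume) := by
    have e1 : (∫ p, pdX V p * pdT Φ p ∂(volume.prod volume))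
        = ∫ t : ℝ, ∫ x : ℝ, pdX V (x, t) * pdT Φ (x, t) := (iter_tx hIA1).symm
    have e2 : (∫ t : ℝ, ∫ x : ℝ, pdX V (x, t) * pdT Φ (x, t))
        = -∫ t : ℝ, ∫ x : ℝ, V (x, t) * pdT (pdX Φ) (x, t) := by
      simp_rw [hT1b]
      exact integral_neg _
    have e3 : (∫ t : ℝ, ∫ x : ℝ, V (x, t) * pdT (pdX Φ) (x, t))
        = ∫ p, V p * pdT (pdX Φ) p ∂(volume.prod volume) := iter_tx hIB1
    have e4 : (∫ p, V p * pdT (pdX Φ) p ∂(volume.prod volume))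
        = ∫ p, pdX W p * pdT (pdX Φ) p ∂(volume.prod volume) := by
      apply integral_congr_ae
      filter_upwards [hae2] with p hp
      by_cases hpR : p ∈ R
      · rw [(hp hpR).2.1]
      · have hnot : p ∉ tsupport Φ := fun hmem => hpR (hsubR hmem)
        rw [pdT_zero_of_nmem (fun h => hnot (ts2 h)), mul_zero, mul_zero]
    have hT2b : ∀ t : ℝ, (∫ x : ℝ, pdX W (x, t) * pdT (pdX Φ) (x, t))
        = -∫ x : ℝ, W (x, t) * pdX (pdT (pdX Φ)) (x, t) := by
      intro t
      exact ibp_lipschitz (hWx t) (sect_contDiffX hG t) (sect_hcsX hcsG t)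
    have e5 : (∫ p, pdX W p * pdT (pdX Φ) p ∂(volume.prod volume))
        = ∫ t : ℝ, ∫ x : ℝ, pdX W (x, t) * pdT (pdX Φ) (x, t) := (iter_tx hIB2).symm
    have e6 : (∫ t : ℝ, ∫ x : ℝ, pdX W (x, t) * pdT (pdX Φ) (x, t))
        = -∫ t : ℝ, ∫ x : ℝ, W (x, t) * pdX (pdT (pdX Φ)) (x, t) := by
      simp_rw [hT2b]
      exact integral_neg _
    have e7 : (∫ t : ℝ, ∫ x : ℝ, W (x, t) * pdX (pdT (pdX Φ)) (x, t))
        = ∫ p, W p * pdX (pdT (pdX Φ)) p ∂(volume.prod volume) := iter_tx hIC1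
    rw [e1, e2, e3, e4, e5, e6, e7, neg_neg]
  -- Term 2 analysis
  have term2 : (∫ p, f (pdX V p) * pdX (pdX Φ) p ∂(volume.prod volume))
      = -∫ p, W p * pdX (pdT (pdX Φ)) p ∂(volume.prod volume) := by
    have e0 : (∫ p, f (pdX V p) * pdX (pdX Φ) p ∂(volume.prod volume))
        = ∫ p, pdT W p * pdX (pdX Φ) p ∂(volume.prod volume) := by
      apply integral_congr_ae
      filter_upwards [hae2] with p hp
      by_cases hpR : p ∈ R
      · rw [(hp hpR).2.2]
      · have hnot : p ∉ tsupport Φ := fun hmem => hpR (hsubR hmem)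
        rw [pdX_zero_of_nmem (fun h => hnot (ts2 h)), mul_zero, mul_zero]
    have hT3b : ∀ x : ℝ, (∫ t : ℝ, pdT W (x, t) * pdX (pdX Φ) (x, t))
        = -∫ t : ℝ, W (x, t) * pdT (pdX (pdX Φ)) (x, t) := by
      intro x
      exact ibp_lipschitz (hWt x) (sect_contDiffT hP3 x) (sect_hcsT hcs3 x)
    have e1 : (∫ p, pdT W p * pdX (pdX Φ) p ∂(volume.prod volume))
        = ∫ x : ℝ, ∫ t : ℝ, pdT W (x, t) * pdX (pdX Φ) (x, t) := (iter_xt hID1).symm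
    have e2 : (∫ x : ℝ, ∫ t : ℝ, pdT W (x, t) * pdX (pdX Φ) (x, t))
        = -∫ x : ℝ, ∫ t : ℝ, W (x, t) * pdT (pdX (pdX Φ)) (x, t) := by
      simp_rw [hT3b]
      exact integral_neg _
    have e3 : (∫ x : ℝ, ∫ t : ℝ, W (x, t) * pdT (pdX (pdX Φ)) (x, t))
        = ∫ p, W p * pdT (pdX (pdX Φ)) p ∂(volume.prod volume) := iter_xt hID2
    have e4 : (∫ p, W p * pdT (pdX (pdX Φ)) p ∂(volume.prod volume))
        = ∫ p, W p * pdX (pdT (pdX Φ)) p ∂(volume.prod volume) := by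
      congr 1 with p
      rw [pdX_pdT_comm hP2 p]
    rw [e0, e1, e2, e3, e4]
  -- put everything together
  rw [step1, step2, integral_add hIA1 hIA2, term1, term2, add_neg_cancel]

end MainAux

/-- Subsection 3.3: if `z = (v,w)` is Lipschitz on each `Ω_T`,
`v_x ∈ [0,1]` a.e., and `w_x = v`, `w_t = ρ(v_x)` a.e. in `Ω_∞`, then `u := v_x` is a
distributional solution of `u_t = (ρ(u))_{xx}` in `Ω_∞ = (0,L) × (0,∞)`. -/
theorem inclusion_gives_distributional_solution
    (L : ℝ) (hL : 0 < L) (f : ℝ → ℝ) (hf : Continuous f)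
    (v w : ℝ → ℝ → ℝ)
    (hlip : ∀ T > (0:ℝ), ∃ K : NNReal,
      LipschitzOnWith K (fun p : ℝ × ℝ => (v p.1 p.2, w p.1 p.2))
        (Set.Ioo 0 L ×ˢ Set.Ioo 0 T))
    (hae : ∀ᵐ p ∂(volume.restrict (Set.Ioo (0:ℝ) L ×ˢ Set.Ioi (0:ℝ))),
      deriv (fun y => v y p.2) p.1 ∈ Set.Icc (0:ℝ) 1 ∧
      deriv (fun y => w y p.2) p.1 = v p.1 p.2 ∧
      deriv (fun s => w p.1 s) p.2 = f (deriv (fun y => v y p.2) p.1)) :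
    ∀ φ : ℝ → ℝ → ℝ,
      ContDiff ℝ (⊤ : ℕ∞) (fun p : ℝ × ℝ => φ p.1 p.2) →
      HasCompactSupport (fun p : ℝ × ℝ => φ p.1 p.2) →
      tsupport (fun p : ℝ × ℝ => φ p.1 p.2) ⊆ Set.Ioo 0 L ×ˢ Set.Ioi 0 →
      (∫ t in Set.Ioi (0:ℝ), ∫ x in Set.Ioo (0:ℝ) L,
          (deriv (fun y => v y t) x * deriv (fun s => φ x s) t
            + f (deriv (fun y => v y t) x) * deriv (deriv (fun y => φ y t)) x)) = 0 := by
  intro φ hφ hφc hφs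
  exact main_aux L hL f hf v w hlip hae (fun p : ℝ × ℝ => φ p.1 p.2) hφ hφc hφs
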